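/- arXiv:1212.0981 — 3 statements merged into one kernel-verified Lean document; each statement's English description precedes it below -/
import Mathlib

section
/- Let φ be a conformal immersion on an open set U ⊆ ℝ² with conformal factor λ, and let n := (φ_u × φ_v)/‖φ_u × φ_v‖ be the unit normal. Then at every point of U the Laplacian Δφ := φ_uu + φ_vv is parallel to n; precisely, Δφ = ⟨Δφ, n⟩ · n, and hence, with the mean curvature H := ⟨Δφ, n⟩/(2λ²), one has Δφ = 2λ²H n on U (which is the paper's formula H = (1/(2λ²)) sign(φ) |Δφ| with sign(φ) = ⟨Δφ, n⟩/|Δφ|). -/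
open Complex

noncomputable section

/-- Euclidean 3-space. -/
abbrev E3 : Type := EuclideanSpace ℝ (Fin 3)

/-- Partial derivative in the first (u) coordinate direction. -/
def pu {F : Type} [NormedAddCommGroup F] [NormedSpace ℝ F]
    (f : ℝ × ℝ → F) (p : ℝ × ℝ) : F := fderiv ℝ f p (1, 0)

/-- Partial derivative in the second (v) coordinate direction. -/
def pv {F : Type} [NormedAddCommGroup F] [NormedSpace ℝ F]
    (f : ℝ × ℝ → F) (p : ℝ × ℝ) : F := fderiv ℝ f p (0, 1)

/-- Cross product on ℝ³. -/
def cross (a b : E3) : E3 :=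
  (WithLp.equiv 2 (Fin 3 → ℝ)).symm
    ![a 1 * b 2 - a 2 * b 1, a 2 * b 0 - a 0 * b 2, a 0 * b 1 - a 1 * b 0]

/-- The Euclidean inner product on ℝ³. -/
def ip (a b : E3) : ℝ := @inner ℝ _ _ a b

/-- `φ` is a smooth conformal immersion on the open set `U ⊆ ℝ²` with
(smooth, positive) conformal factor `lam`:  ⟨φ_u,φ_u⟩ = λ², ⟨φ_v,φ_v⟩ = λ²,
⟨φ_u,φ_v⟩ = 0 at every point of `U`. -/
def IsConfImm (U : Set (ℝ × ℝ)) (φ : ℝ × ℝ → E3) (lam : ℝ × ℝ → ℝ) : Prop :=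
  IsOpen U ∧ ContDiffOn ℝ (⊤ : ℕ∞) φ U ∧ ContDiffOn ℝ (⊤ : ℕ∞) lam U ∧
    ∀ p ∈ U, 0 < lam p ∧
      ip (pu φ p) (pu φ p) = (lam p) ^ 2 ∧
      ip (pv φ p) (pv φ p) = (lam p) ^ 2 ∧
      ip (pu φ p) (pv φ p) = 0

/-- Complexification ℝ³ ↪ ℂ³. -/
def toC (x : E3) : Fin 3 → ℂ := fun j => (x j : ℂ)

/-- Complex-bilinear dot product on ℂ³:  (a,b) = Σⱼ aⱼ bⱼ. -/
def cdot (a b : Fin 3 → ℂ) : ℂ := ∑ j, a j * b j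

/-- ∂_z = ½(∂_u − i ∂_v) for maps into complex normed spaces. -/
def dz {F : Type} [NormedAddCommGroup F] [NormedSpace ℂ F]
    (f : ℝ × ℝ → F) (p : ℝ × ℝ) : F :=
  (2 : ℂ)⁻¹ • (pu f p - Complex.I • pv f p)

/-- ∂_z̄ = ½(∂_u + i ∂_v) for maps into complex normed spaces. -/
def dzbar {F : Type} [NormedAddCommGroup F] [NormedSpace ℂ F]
    (f : ℝ × ℝ → F) (p : ℝ × ℝ) : F :=
  (2 : ℂ)⁻¹ • (pu f p + Complex.I • pv f p)

/-- `f_z := ½(f_u − i f_v) ∈ ℂ³` for a real-vector-valued map `f` (in particular `φ_z`). -/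
def phiz (f : ℝ × ℝ → E3) (p : ℝ × ℝ) : Fin 3 → ℂ :=
  (2 : ℂ)⁻¹ • (toC (pu f p) - Complex.I • toC (pv f p))

/-- `f_z̄ := ½(f_u + i f_v) ∈ ℂ³` for a real-vector-valued map `f` (in particular `φ_z̄`). -/
def phizbar (f : ℝ × ℝ → E3) (p : ℝ × ℝ) : Fin 3 → ℂ :=
  (2 : ℂ)⁻¹ • (toC (pu f p) + Complex.I • toC (pv f p))

/-- The unit normal n = (φ_u × φ_v)/‖φ_u × φ_v‖. -/
def nvec (φ : ℝ × ℝ → E3) (p : ℝ × ℝ) : E3 :=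
  ‖cross (pu φ p) (pv φ p)‖⁻¹ • cross (pu φ p) (pv φ p)

/-- Componentwise Laplacian Δ = ∂_uu + ∂_vv. -/
def lap {F : Type} [NormedAddCommGroup F] [NormedSpace ℝ F]
    (f : ℝ × ℝ → F) (p : ℝ × ℝ) : F := pu (pu f) p + pv (pv f) p

/-- Mean curvature H = ⟨Δφ, n⟩/(2λ²). -/
def mcurv (φ : ℝ × ℝ → E3) (lam : ℝ × ℝ → ℝ) (p : ℝ × ℝ) : ℝ :=
  ip (lap φ p) (nvec φ p) / (2 * (lam p) ^ 2)

/-- μ := (∂_z φ_z, n). -/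
def muQ (φ : ℝ × ℝ → E3) (p : ℝ × ℝ) : ℂ :=
  cdot (dz (phiz φ) p) (toC (nvec φ p))

/-!
Differentiating the conformality relations `|φ_u|² = |φ_v|²` and `⟨φ_u, φ_v⟩ = 0` and using
`φ_uv = φ_vu` shows that `Δφ` is orthogonal to `φ_u` and `φ_v`. Since these are nonzero and
orthogonal, `φ_u × φ_v ≠ 0`, and by the triple product expansion every vector orthogonal to
`φ_u` and `φ_v` is a multiple of `φ_u × φ_v`, i.e. equals its projection onto `n`.
-/

open scoped Matrix
open Filter Topology RealInnerProductSpace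

lemma ip_eq_dotProduct (a b : E3) : ip a b = a.ofLp ⬝ᵥ b.ofLp :=
  dotProduct_comm _ _

lemma cross_eq_toLp (a b : E3) : cross a b = WithLp.toLp 2 (a.ofLp ⨯₃ b.ofLp) := by
  simp [cross, cross_apply]

lemma ip_cross_cross (a b : E3) :
    ip (cross a b) (cross a b) = ip a a * ip b b - ip a b ^ 2 := by
  simp only [ip_eq_dotProduct, cross_eq_toLp, cross_dot_cross, dotProduct_comm b.ofLp a.ofLp]
  ring

lemma cross_ne_zero_of_ip_eq_zero {a b : E3} (ha : a ≠ 0) (hb : b ≠ 0) (hab : ip a b = 0) :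
    cross a b ≠ 0 := by
  rw [← real_inner_self_pos, ← ip, ip_cross_cross, hab, sq, mul_zero, sub_zero]
  exact mul_pos (real_inner_self_pos.2 ha) (real_inner_self_pos.2 hb)

lemma ip_cross_cross_smul_eq {a b w : E3} (hwa : ip w a = 0) (hwb : ip w b = 0) :
    ip (cross a b) (cross a b) • w = ip w (cross a b) • cross a b := by
  have hcw : a.ofLp ⨯₃ b.ofLp ⨯₃ w.ofLp = 0 := by
    rw [cross_cross_eq_smul_sub_smul, dotProduct_comm a.ofLp, dotProduct_comm b.ofLp,
      ← ip_eq_dotProduct, ← ip_eq_dotProduct, hwa, hwb, zero_smul, zero_smul, sub_zero]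
  have := cross_cross_eq_smul_sub_smul' (a.ofLp ⨯₃ b.ofLp) (a.ofLp ⨯₃ b.ofLp) w.ofLp
  rw [hcw, LinearMap.map_zero, eq_comm, sub_eq_zero] at this
  apply WithLp.ofLp_injective
  simpa [ip_eq_dotProduct, cross_eq_toLp, dotProduct_comm w.ofLp] using this.symm

lemma eq_inner_smul_of_inner_self_smul_eq {E : Type*} [NormedAddCommGroup E]
    [InnerProductSpace ℝ E] {c w : E} (hc : c ≠ 0) (h : ⟪c, c⟫ • w = ⟪w, c⟫ • c) :
    w = ⟪w, ‖c‖⁻¹ • c⟫ • ‖c‖⁻¹ • c := by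
  have hc' : ⟪c, c⟫ ≠ 0 := (real_inner_self_pos.2 hc).ne'
  rw [real_inner_smul_right, smul_smul, mul_right_comm, ← mul_inv, ← sq,
    ← real_inner_self_eq_norm_sq, mul_smul, ← h, smul_smul, inv_mul_cancel₀ hc',
    one_smul]

section NormedSpace

variable {F : Type} [NormedAddCommGroup F] [NormedSpace ℝ F] {φ : ℝ × ℝ → F} {p : ℝ × ℝ}

lemma ContDiffAt.differentiableAt_fderiv (hφ : ContDiffAt ℝ 2 φ p) :
    DifferentiableAt ℝ (fderiv ℝ φ) p :=
  (hφ.fderiv_right (m := 1) (by norm_num)).differentiableAt one_ne_zero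

lemma differentiableAt_pu (hφ : ContDiffAt ℝ 2 φ p) : DifferentiableAt ℝ (pu φ) p :=
  hφ.differentiableAt_fderiv.clm_apply (differentiableAt_const _)

lemma differentiableAt_pv (hφ : ContDiffAt ℝ 2 φ p) : DifferentiableAt ℝ (pv φ) p :=
  hφ.differentiableAt_fderiv.clm_apply (differentiableAt_const _)

lemma pv_pu_eq_pu_pv (hφ : ContDiffAt ℝ 2 φ p) : pv (pu φ) p = pu (pv φ) p := by
  change fderiv ℝ (fun q => fderiv ℝ φ q (1, 0)) p (0, 1)
    = fderiv ℝ (fun q => fderiv ℝ φ q (0, 1)) p (1, 0)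
  simp only [fderiv_clm_apply hφ.differentiableAt_fderiv (differentiableAt_const _)]
  simpa using hφ.isSymmSndFDerivAt (by simp) (0, 1) (1, 0)

lemma pu_congr {ψ χ : ℝ × ℝ → F} (h : ψ =ᶠ[𝓝 p] χ) : pu ψ p = pu χ p := by
  rw [pu, pu, h.fderiv_eq]

lemma pv_congr {ψ χ : ℝ × ℝ → F} (h : ψ =ᶠ[𝓝 p] χ) : pv ψ p = pv χ p := by
  rw [pv, pv, h.fderiv_eq]

end NormedSpace

section InnerProductSpace

variable {F : Type} [NormedAddCommGroup F] [InnerProductSpace ℝ F] {φ f g : ℝ × ℝ → F}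
  {p : ℝ × ℝ}

lemma pu_inner (hf : DifferentiableAt ℝ f p) (hg : DifferentiableAt ℝ g p) :
    pu (fun q => ⟪f q, g q⟫) p = ⟪f p, pu g p⟫ + ⟪pu f p, g p⟫ :=
  fderiv_inner_apply ℝ hf hg _

lemma pv_inner (hf : DifferentiableAt ℝ f p) (hg : DifferentiableAt ℝ g p) :
    pv (fun q => ⟪f q, g q⟫) p = ⟪f p, pv g p⟫ + ⟪pv f p, g p⟫ :=
  fderiv_inner_apply ℝ hf hg _

lemma inner_lap_pu_eq_zero (hφ : ContDiffAt ℝ 2 φ p)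
    (hEG : (fun q => ⟪pu φ q, pu φ q⟫) =ᶠ[𝓝 p] fun q => ⟪pv φ q, pv φ q⟫)
    (hF : (fun q => ⟪pu φ q, pv φ q⟫) =ᶠ[𝓝 p] fun _ => 0) :
    ⟪lap φ p, pu φ p⟫ = 0 := by
  have hu := differentiableAt_pu hφ
  have hv := differentiableAt_pv hφ
  have hE_u : ⟪pu φ p, pu (pu φ) p⟫ + ⟪pu (pu φ) p, pu φ p⟫
      = ⟪pv φ p, pu (pv φ) p⟫ + ⟪pu (pv φ) p, pv φ p⟫ := by
    rw [← pu_inner hu hu, ← pu_inner hv hv]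
    exact pu_congr hEG
  have hF_v : ⟪pu φ p, pv (pv φ) p⟫ + ⟪pv (pu φ) p, pv φ p⟫ = 0 := by
    rw [← pv_inner hu hv, pv_congr hF, pv, fderiv_const_apply, zero_apply]
  rw [pv_pu_eq_pu_pv hφ] at hF_v
  rw [lap, inner_add_left]
  linarith [real_inner_comm (pu φ p) (pu (pu φ) p), real_inner_comm (pv φ p) (pu (pv φ) p),
    real_inner_comm (pu φ p) (pv (pv φ) p)]

lemma inner_lap_pv_eq_zero (hφ : ContDiffAt ℝ 2 φ p)
    (hEG : (fun q => ⟪pu φ q, pu φ q⟫) =ᶠ[𝓝 p] fun q => ⟪pv φ q, pv φ q⟫)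
    (hF : (fun q => ⟪pu φ q, pv φ q⟫) =ᶠ[𝓝 p] fun _ => 0) :
    ⟪lap φ p, pv φ p⟫ = 0 := by
  have hu := differentiableAt_pu hφ
  have hv := differentiableAt_pv hφ
  have hE_v : ⟪pu φ p, pv (pu φ) p⟫ + ⟪pv (pu φ) p, pu φ p⟫
      = ⟪pv φ p, pv (pv φ) p⟫ + ⟪pv (pv φ) p, pv φ p⟫ := by
    rw [← pv_inner hu hu, ← pv_inner hv hv]
    exact pv_congr hEG
  have hF_u : ⟪pu φ p, pu (pv φ) p⟫ + ⟪pu (pu φ) p, pv φ p⟫ = 0 := by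
    rw [← pu_inner hu hv, pu_congr hF, pu, fderiv_const_apply, zero_apply]
  rw [pv_pu_eq_pu_pv hφ] at hE_v
  rw [lap, inner_add_left]
  linarith [real_inner_comm (pu φ p) (pu (pv φ) p), real_inner_comm (pv φ p) (pv (pv φ) p)]

end InnerProductSpace

lemma eq_ip_nvec_smul_nvec {φ : ℝ × ℝ → E3} {p : ℝ × ℝ} {w : E3} (hu : pu φ p ≠ 0)
    (hv : pv φ p ≠ 0) (huv : ip (pu φ p) (pv φ p) = 0) (hwu : ip w (pu φ p) = 0)
    (hwv : ip w (pv φ p) = 0) : w = ip w (nvec φ p) • nvec φ p :=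
  eq_inner_smul_of_inner_self_smul_eq (cross_ne_zero_of_ip_eq_zero hu hv huv)
    (ip_cross_cross_smul_eq hwu hwv)

/-- Δφ is parallel to the unit normal; Δφ = ⟨Δφ, n⟩ n = 2λ²H n. -/
theorem conformal_laplacian_parallel_to_normal
    (U : Set (ℝ × ℝ)) (φ : ℝ × ℝ → E3) (lam : ℝ × ℝ → ℝ)
    (h : IsConfImm U φ lam) :
    ∀ p ∈ U,
      lap φ p = ip (lap φ p) (nvec φ p) • nvec φ p ∧
      lap φ p = (2 * (lam p) ^ 2 * mcurv φ lam p) • nvec φ p := by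
  intro p hp
  obtain ⟨hU, hφ, -, hconf⟩ := h
  have hnear : ∀ᶠ q in 𝓝 p, q ∈ U := hU.mem_nhds hp
  have hφp : ContDiffAt ℝ 2 φ p :=
    (hφ.contDiffAt hnear).of_le (WithTop.coe_le_coe.2 le_top)
  have hEG := hnear.mono fun q hq => (hconf q hq).2.1.trans (hconf q hq).2.2.1.symm
  have hF := hnear.mono fun q hq => (hconf q hq).2.2.2
  obtain ⟨hlam, hE, hG, hFp⟩ := hconf p hp
  have hu : pu φ p ≠ 0 := real_inner_self_pos.1 (show 0 < ip _ _ by rw [hE]; positivity)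
  have hv : pv φ p ≠ 0 := real_inner_self_pos.1 (show 0 < ip _ _ by rw [hG]; positivity)
  have hparallel : lap φ p = ip (lap φ p) (nvec φ p) • nvec φ p :=
    eq_ip_nvec_smul_nvec hu hv hFp (inner_lap_pu_eq_zero hφp hEG hF)
      (inner_lap_pv_eq_zero hφp hEG hF)
  refine ⟨hparallel, ?_⟩
  rwa [mcurv, mul_div_cancel₀ _ (by positivity)]
end
end

section
/- Let φ be a conformal immersion on an open set U ⊆ ℝ² with conformal factor λ, with unit normal n := (φ_u × φ_v)/‖φ_u × φ_v‖, mean curvature H := ⟨Δφ, n⟩/(2λ²), and μ := (∂_z φ_z, n). Then at every point of U the Laplacian of μ satisfies Δμ = 2λ (2 (∂_z λ)(∂_z H) + λ ∂_z∂_z H), where Δ := ∂_uu + ∂_vv is the real Laplacian (equivalently, ∂_z∂_z̄ μ = λ (∂_z λ)(∂_z H) + (λ²/2) ∂_z∂_z H; this is the differentiated Codazzi equation, the paper's equation (19) with the convention Δ = 4 ∂_z∂_z̄). -/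
open Complex

noncomputable section

/-! The function μ = (φ_zz, n) satisfies the Codazzi equation ∂_z̄ μ = (λ²/2) ∂_z H, and the
theorem is obtained by applying ∂_z to it, since Δ = 4 ∂_z ∂_z̄. To prove the Codazzi equation,
write e, f, g for the coefficients of the second fundamental form in the coordinates (u, v), so
that μ = (e - g)/4 - i f/2 and 2λ²H = e + g. Differentiating ⟨φ_uu, n⟩ and ⟨φ_uv, n⟩ and using
φ_uuv = φ_uvu gives e_v - f_u = ⟨φ_uu, n_v⟩ - ⟨φ_uv, n_u⟩. Expanding the right-hand side in the
orthogonal frame (φ_u, φ_v, n), whose inner products with the second derivatives come from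
differentiating the conformality relations, gives e_v - f_u = 2λλ_v H. The same argument gives
g_u - f_v = 2λλ_u H. -/

open Filter Topology
open scoped ContDiff InnerProductSpace

-- `pu f` and `pv f` are `dirDeriv (1, 0) f` and `dirDeriv (0, 1) f` by definition.
def dirDeriv {F : Type*} [NormedAddCommGroup F] [NormedSpace ℝ F]
    (w : ℝ × ℝ) (f : ℝ × ℝ → F) (p : ℝ × ℝ) : F :=
  fderiv ℝ f p w

theorem lap_def {F : Type} [NormedAddCommGroup F] [NormedSpace ℝ F] (f : ℝ × ℝ → F)
    (p : ℝ × ℝ) :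
    lap f p = dirDeriv (1, 0) (dirDeriv (1, 0) f) p + dirDeriv (0, 1) (dirDeriv (0, 1) f) p :=
  rfl

section DirDeriv

variable {F G : Type*} [NormedAddCommGroup F] [NormedSpace ℝ F]
  [NormedAddCommGroup G] [NormedSpace ℝ G] {f g : ℝ × ℝ → F} {p : ℝ × ℝ} (w : ℝ × ℝ)

theorem dirDeriv_congr_of_eventuallyEq (h : f =ᶠ[𝓝 p] g) :
    dirDeriv w f p = dirDeriv w g p := by
  rw [dirDeriv, h.fderiv_eq, dirDeriv]

@[simp]
theorem dirDeriv_const (c : F) : dirDeriv w (fun _ => c) p = 0 := by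
  simp [dirDeriv]

theorem dirDeriv_add (hf : DifferentiableAt ℝ f p) (hg : DifferentiableAt ℝ g p) :
    dirDeriv w (fun q => f q + g q) p = dirDeriv w f p + dirDeriv w g p := by
  simp [dirDeriv, fderiv_fun_add hf hg]

theorem dirDeriv_sub (hf : DifferentiableAt ℝ f p) (hg : DifferentiableAt ℝ g p) :
    dirDeriv w (fun q => f q - g q) p = dirDeriv w f p - dirDeriv w g p := by
  simp [dirDeriv, fderiv_fun_sub hf hg]

theorem dirDeriv_const_smul {R : Type*} [Semiring R] [Module R F] [SMulCommClass ℝ R F]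
    [ContinuousConstSMul R F] (hf : DifferentiableAt ℝ f p) (c : R) :
    dirDeriv w (fun q => c • f q) p = c • dirDeriv w f p := by
  simp [dirDeriv, fderiv_fun_const_smul hf c]

theorem ContinuousLinearMap.dirDeriv_comp (L : F →L[ℝ] G) (hf : DifferentiableAt ℝ f p) :
    dirDeriv w (fun q => L (f q)) p = L (dirDeriv w f p) := by
  rw [dirDeriv, dirDeriv, show (fun q => L (f q)) = L ∘ f from rfl,
    fderiv_comp p L.differentiableAt hf]
  simp

theorem dirDeriv_mul {𝔸 : Type*} [NormedCommRing 𝔸] [NormedAlgebra ℝ 𝔸] {a b : ℝ × ℝ → 𝔸}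
    (ha : DifferentiableAt ℝ a p) (hb : DifferentiableAt ℝ b p) :
    dirDeriv w (fun q => a q * b q) p = dirDeriv w a p * b p + a p * dirDeriv w b p := by
  simp [dirDeriv, fderiv_fun_mul ha hb, add_comm, mul_comm]

theorem dirDeriv_inner {E : Type*} [NormedAddCommGroup E] [InnerProductSpace ℝ E]
    {f g : ℝ × ℝ → E} (hf : DifferentiableAt ℝ f p) (hg : DifferentiableAt ℝ g p) :
    dirDeriv w (fun q => ⟪f q, g q⟫_ℝ) p
      = ⟪dirDeriv w f p, g p⟫_ℝ + ⟪f p, dirDeriv w g p⟫_ℝ := by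
  rw [dirDeriv, fderiv_inner_apply (𝕜 := ℝ) hf hg, add_comm]
  rfl

theorem ContDiffAt.dirDeriv {m n : WithTop ℕ∞} (hf : ContDiffAt ℝ n f p) (hmn : m + 1 ≤ n) :
    ContDiffAt ℝ m (dirDeriv w f) p :=
  (hf.fderiv_right hmn).clm_apply contDiffAt_const

theorem dirDeriv_comm (hf : ContDiffAt ℝ 2 f p) (v : ℝ × ℝ) :
    dirDeriv v (dirDeriv w f) p = dirDeriv w (dirDeriv v f) p := by
  have hd : DifferentiableAt ℝ (fderiv ℝ f) p :=
    (hf.fderiv_right le_rfl).differentiableAt one_ne_zero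
  have hsecond (x y : ℝ × ℝ) :
      dirDeriv x (dirDeriv y f) p = fderiv ℝ (fderiv ℝ f) p x y := by
    change fderiv ℝ (fun q => fderiv ℝ f q y) p x = _
    rw [fderiv_clm_apply hd (differentiableAt_const y)]
    simp
  rw [hsecond, hsecond]
  exact hf.isSymmSndFDerivAt (by simp) v w

theorem dirDeriv_dirDeriv_dirDeriv_comm (hf : ContDiffAt ℝ 3 f p) (v : ℝ × ℝ) :
    dirDeriv v (dirDeriv w (dirDeriv w f)) p = dirDeriv w (dirDeriv w (dirDeriv v f)) p := by
  rw [dirDeriv_comm w (hf.dirDeriv w (by norm_num)) v]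
  exact dirDeriv_congr_of_eventuallyEq w ((hf.eventually (by simp)).mono fun q hq =>
    dirDeriv_comm w (hq.of_le (by norm_num)) v)

end DirDeriv

theorem ContDiffAt.ofReal {n : WithTop ℕ∞} {r : ℝ × ℝ → ℝ} {p : ℝ × ℝ}
    (hr : ContDiffAt ℝ n r p) : ContDiffAt ℝ n (fun q => (r q : ℂ)) p :=
  ofRealCLM.contDiff.contDiffAt.comp p hr

theorem dirDeriv_ofReal {r : ℝ × ℝ → ℝ} {p : ℝ × ℝ} (w : ℝ × ℝ)
    (hr : DifferentiableAt ℝ r p) : dirDeriv w (fun q => (r q : ℂ)) p = dirDeriv w r p :=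
  ofRealCLM.dirDeriv_comp w hr

section Wirtinger

variable {F : Type} [NormedAddCommGroup F] [NormedSpace ℂ F] {f : ℝ × ℝ → F} {p : ℝ × ℝ}

theorem dz_def (f : ℝ × ℝ → F) (p : ℝ × ℝ) :
    dz f p = (2 : ℂ)⁻¹ • (dirDeriv (1, 0) f p - I • dirDeriv (0, 1) f p) := rfl

theorem dzbar_def (f : ℝ × ℝ → F) (p : ℝ × ℝ) :
    dzbar f p = (2 : ℂ)⁻¹ • (dirDeriv (1, 0) f p + I • dirDeriv (0, 1) f p) := rfl

theorem dz_congr_of_eventuallyEq {g : ℝ × ℝ → F} (h : f =ᶠ[𝓝 p] g) : dz f p = dz g p := by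
  simp only [dz_def, dirDeriv_congr_of_eventuallyEq _ h]

@[simp]
theorem dz_const (c : F) : dz (fun _ => c) p = 0 := by
  simp [dz_def]

theorem dz_mul {a b : ℝ × ℝ → ℂ} (ha : DifferentiableAt ℝ a p) (hb : DifferentiableAt ℝ b p) :
    dz (fun q => a q * b q) p = dz a p * b p + a p * dz b p := by
  simp only [dz_def, dirDeriv_mul _ ha hb, smul_eq_mul]
  ring

theorem dz_const_mul (c : ℂ) {a : ℝ × ℝ → ℂ} (ha : DifferentiableAt ℝ a p) :
    dz (fun q => c * a q) p = c * dz a p := by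
  rw [dz_mul (differentiableAt_const c) ha, dz_const, zero_mul, zero_add]

theorem ContDiffAt.dz {m n : WithTop ℕ∞} (hf : ContDiffAt ℝ n f p) (hmn : m + 1 ≤ n) :
    ContDiffAt ℝ m (dz f) p :=
  ((hf.dirDeriv (1, 0) hmn).sub ((hf.dirDeriv (0, 1) hmn).const_smul I)).const_smul _

theorem lap_eq_four_smul_dz_dzbar (hf : ContDiffAt ℝ 2 f p) :
    lap f p = (4 : ℂ) • dz (dzbar f) p := by
  have hdiff (w : ℝ × ℝ) : DifferentiableAt ℝ (dirDeriv w f) p :=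
    (hf.dirDeriv w (m := 1) (by norm_num)).differentiableAt one_ne_zero
  have hdzbar (w : ℝ × ℝ) : dirDeriv w (dzbar f) p = (2 : ℂ)⁻¹ •
      (dirDeriv w (dirDeriv (1, 0) f) p + I • dirDeriv w (dirDeriv (0, 1) f) p) := by
    rw [show dzbar f = fun q => (2 : ℂ)⁻¹ • (dirDeriv (1, 0) f q + I • dirDeriv (0, 1) f q)
        from rfl,
      dirDeriv_const_smul _ ((hdiff _).fun_add ((hdiff _).fun_const_smul I)),
      dirDeriv_add _ (hdiff _) ((hdiff _).fun_const_smul I), dirDeriv_const_smul _ (hdiff _)]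
  rw [lap_def, dz_def, hdzbar, hdzbar, dirDeriv_comm (1, 0) hf (0, 1)]
  linear_combination (norm := module) I_mul_I • dirDeriv (0, 1) (dirDeriv (0, 1) f) p

end Wirtinger

section Codazzi

variable {E : Type*} [NormedAddCommGroup E] [InnerProductSpace ℝ E]

theorem inner_eq_of_conformal_frame (hE : Module.finrank ℝ E = 3) {a b n : E} {L : ℝ}
    (hL : L ≠ 0) (ha : ⟪a, a⟫_ℝ = L ^ 2) (hb : ⟪b, b⟫_ℝ = L ^ 2) (hab : ⟪a, b⟫_ℝ = 0)
    (han : ⟪a, n⟫_ℝ = 0) (hbn : ⟪b, n⟫_ℝ = 0) (hn : ⟪n, n⟫_ℝ = 1) (x y : E) :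
    ⟪x, y⟫_ℝ = (⟪x, a⟫_ℝ * ⟪a, y⟫_ℝ + ⟪x, b⟫_ℝ * ⟪b, y⟫_ℝ) / L ^ 2 + ⟪x, n⟫_ℝ * ⟪n, y⟫_ℝ := by
  let v : Fin 3 → E := ![L⁻¹ • a, L⁻¹ • b, n]
  have hv : Orthonormal ℝ v := by
    rw [orthonormal_iff_ite]
    intro i j
    fin_cases i <;> fin_cases j <;>
      simp [v, real_inner_smul_left, real_inner_smul_right, ha, hb, hab, han, hbn, hn,
        real_inner_comm a b, real_inner_comm a n, real_inner_comm b n,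
        pow_two, inv_mul_cancel_left₀ hL, inv_mul_cancel₀ hL, -inner_self_eq_norm_sq_to_K]
  let B := basisOfOrthonormalOfCardEqFinrank hv (by simp [hE])
  have hB : Orthonormal ℝ B := by rwa [coe_basisOfOrthonormalOfCardEqFinrank]
  rw [← (B.toOrthonormalBasis hB).sum_inner_mul_inner x y]
  simp only [Module.Basis.coe_toOrthonormalBasis, coe_basisOfOrthonormalOfCardEqFinrank, B, v,
    Fin.sum_univ_three, Fin.isValue, Matrix.cons_val_zero, Matrix.cons_val_one, Matrix.cons_val,
    real_inner_smul_left, real_inner_smul_right]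
  field_simp

variable {F G : ℝ × ℝ → E} {p : ℝ × ℝ}

theorem inner_dirDeriv_self_eq {r : ℝ × ℝ → ℝ} (w : ℝ × ℝ)
    (h : ∀ᶠ q in 𝓝 p, ⟪F q, F q⟫_ℝ = r q ^ 2) (hF : DifferentiableAt ℝ F p)
    (hr : DifferentiableAt ℝ r p) :
    ⟪dirDeriv w F p, F p⟫_ℝ = r p * dirDeriv w r p := by
  have hderiv := dirDeriv_congr_of_eventuallyEq w (h.mono fun q hq => hq.trans (sq (r q)))
  rw [dirDeriv_inner w hF hF, dirDeriv_mul w hr hr, real_inner_comm (F p)] at hderiv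
  rw [real_inner_comm (F p)]
  linarith

theorem inner_dirDeriv_add_inner_dirDeriv_eq_zero (w : ℝ × ℝ)
    (h : ∀ᶠ q in 𝓝 p, ⟪F q, G q⟫_ℝ = 0) (hF : DifferentiableAt ℝ F p)
    (hG : DifferentiableAt ℝ G p) :
    ⟪dirDeriv w F p, G p⟫_ℝ + ⟪F p, dirDeriv w G p⟫_ℝ = 0 := by
  rw [← dirDeriv_inner w hF hG, dirDeriv_congr_of_eventuallyEq w h, dirDeriv_const]

theorem codazzi_of_conformal {φ N : ℝ × ℝ → E} {lam : ℝ × ℝ → ℝ} (x y : ℝ × ℝ)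
    (hE : Module.finrank ℝ E = 3) (hφ : ContDiffAt ℝ 3 φ p) (hN : DifferentiableAt ℝ N p)
    (hlam : DifferentiableAt ℝ lam p) (hlam0 : lam p ≠ 0)
    (hxx : ∀ᶠ q in 𝓝 p, ⟪dirDeriv x φ q, dirDeriv x φ q⟫_ℝ = lam q ^ 2)
    (hyy : ∀ᶠ q in 𝓝 p, ⟪dirDeriv y φ q, dirDeriv y φ q⟫_ℝ = lam q ^ 2)
    (hxy : ∀ᶠ q in 𝓝 p, ⟪dirDeriv x φ q, dirDeriv y φ q⟫_ℝ = 0)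
    (hxN : ∀ᶠ q in 𝓝 p, ⟪dirDeriv x φ q, N q⟫_ℝ = 0)
    (hyN : ∀ᶠ q in 𝓝 p, ⟪dirDeriv y φ q, N q⟫_ℝ = 0)
    (hNN : ∀ᶠ q in 𝓝 p, ⟪N q, N q⟫_ℝ = 1) :
    dirDeriv y (fun q => ⟪dirDeriv x (dirDeriv x φ) q, N q⟫_ℝ) p
        - dirDeriv x (fun q => ⟪dirDeriv x (dirDeriv y φ) q, N q⟫_ℝ) p
      = dirDeriv y lam p / lam p
          * (⟪dirDeriv x (dirDeriv x φ) p, N p⟫_ℝ + ⟪dirDeriv y (dirDeriv y φ) p, N p⟫_ℝ) := by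
  have hφ' (w : ℝ × ℝ) : ContDiffAt ℝ 2 (dirDeriv w φ) p := hφ.dirDeriv w (by norm_num)
  have hd₁ (w : ℝ × ℝ) : DifferentiableAt ℝ (dirDeriv w φ) p :=
    (hφ' w).differentiableAt two_ne_zero
  have hd₂ (v w : ℝ × ℝ) : DifferentiableAt ℝ (dirDeriv v (dirDeriv w φ)) p :=
    ((hφ' w).dirDeriv v (m := 1) (by norm_num)).differentiableAt one_ne_zero
  have hsymm : dirDeriv y (dirDeriv x φ) p = dirDeriv x (dirDeriv y φ) p :=
    dirDeriv_comm x (hφ.of_le (by norm_num)) y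
  have hNN' : ∀ᶠ q in 𝓝 p, ⟪N q, N q⟫_ℝ = (fun _ => (1 : ℝ)) q ^ 2 := by simpa using hNN
  have hNx := inner_dirDeriv_self_eq x hNN' hN (differentiableAt_const _)
  have hNy := inner_dirDeriv_self_eq y hNN' hN (differentiableAt_const _)
  have hxxx := inner_dirDeriv_self_eq x hxx (hd₁ x) hlam
  have hxxy := inner_dirDeriv_self_eq y hxx (hd₁ x) hlam
  have hyyx := inner_dirDeriv_self_eq x hyy (hd₁ y) hlam
  have hxyx := inner_dirDeriv_add_inner_dirDeriv_eq_zero x hxy (hd₁ x) (hd₁ y)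
  have hxNx := inner_dirDeriv_add_inner_dirDeriv_eq_zero x hxN (hd₁ x) hN
  have hxNy := inner_dirDeriv_add_inner_dirDeriv_eq_zero y hxN (hd₁ x) hN
  have hyNx := inner_dirDeriv_add_inner_dirDeriv_eq_zero x hyN (hd₁ y) hN
  have hyNy := inner_dirDeriv_add_inner_dirDeriv_eq_zero y hyN (hd₁ y) hN
  have frame := inner_eq_of_conformal_frame hE hlam0 hxx.self_of_nhds hyy.self_of_nhds
    hxy.self_of_nhds hxN.self_of_nhds hyN.self_of_nhds hNN.self_of_nhds
  rw [dirDeriv_inner y (hd₂ x x) hN, dirDeriv_inner x (hd₂ x y) hN,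
    dirDeriv_dirDeriv_dirDeriv_comm x hφ y,
    frame (dirDeriv x (dirDeriv x φ) p), frame (dirDeriv x (dirDeriv y φ) p)]
  rw [hsymm] at hxxy hxNy
  simp only [real_inner_comm (dirDeriv x φ p), real_inner_comm (dirDeriv y φ p),
    real_inner_comm (N p)] at *
  simp only [dirDeriv_const, mul_zero] at hNx hNy
  rw [eq_neg_of_add_eq_zero_left hxyx, eq_neg_of_add_eq_zero_right hxNx,
    eq_neg_of_add_eq_zero_right hxNy, eq_neg_of_add_eq_zero_right hyNx,
    eq_neg_of_add_eq_zero_right hyNy, hxxx, hxxy, hyyx, hNx, hNy]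
  field_simp
  ring

end Codazzi

section CrossProduct

theorem inner_cross_left (a b : E3) : ⟪a, cross a b⟫_ℝ = 0 := by
  simp only [cross, Fin.isValue, WithLp.equiv_symm_apply, PiLp.inner_apply, RCLike.inner_apply,
    Real.ringHom_apply, Fin.sum_univ_three, Matrix.cons_val_zero, Matrix.cons_val_one,
    Matrix.cons_val]
  ring

theorem inner_cross_right (a b : E3) : ⟪b, cross a b⟫_ℝ = 0 := by
  simp only [cross, Fin.isValue, WithLp.equiv_symm_apply, PiLp.inner_apply, RCLike.inner_apply,
    Real.ringHom_apply, Fin.sum_univ_three, Matrix.cons_val_zero, Matrix.cons_val_one,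
    Matrix.cons_val]
  ring

theorem inner_cross_self (a b : E3) :
    ⟪cross a b, cross a b⟫_ℝ = ⟪a, a⟫_ℝ * ⟪b, b⟫_ℝ - ⟪a, b⟫_ℝ ^ 2 := by
  simp only [cross, Fin.isValue, WithLp.equiv_symm_apply, PiLp.inner_apply, RCLike.inner_apply,
    Real.ringHom_apply, Fin.sum_univ_three, Matrix.cons_val_zero, Matrix.cons_val_one,
    Matrix.cons_val]
  ring

theorem ContDiffAt.cross {E : Type*} [NormedAddCommGroup E] [NormedSpace ℝ E] {f g : E → E3}
    {x : E} {n : WithTop ℕ∞} (hf : ContDiffAt ℝ n f x) (hg : ContDiffAt ℝ n g x) :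
    ContDiffAt ℝ n (fun y => cross (f y) (g y)) x := by
  have hcoord (h : E → E3) (hh : ContDiffAt ℝ n h x) (i : Fin 3) :
      ContDiffAt ℝ n (fun y => h y i) x :=
    (contDiffAt_piLp 2).1 hh i
  refine (contDiffAt_piLp 2).2 fun i => ?_
  fin_cases i <;>
    exact ((hcoord f hf _).mul (hcoord g hg _)).sub ((hcoord f hf _).mul (hcoord g hg _))

theorem inner_pu_nvec (φ : ℝ × ℝ → E3) (q : ℝ × ℝ) : ⟪pu φ q, nvec φ q⟫_ℝ = 0 := by
  rw [nvec, inner_smul_right, inner_cross_left, mul_zero]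

theorem inner_pv_nvec (φ : ℝ × ℝ → E3) (q : ℝ × ℝ) : ⟪pv φ q, nvec φ q⟫_ℝ = 0 := by
  rw [nvec, inner_smul_right, inner_cross_right, mul_zero]

theorem inner_nvec_self {φ : ℝ × ℝ → E3} {q : ℝ × ℝ} (h : cross (pu φ q) (pv φ q) ≠ 0) :
    ⟪nvec φ q, nvec φ q⟫_ℝ = 1 := by
  rw [nvec, real_inner_smul_left, real_inner_smul_right, real_inner_self_eq_norm_sq]
  field_simp [norm_ne_zero_iff.mpr h]

theorem contDiffAt_nvec {φ : ℝ × ℝ → E3} {q : ℝ × ℝ} (hφ : ContDiffAt ℝ ∞ φ q)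
    (h : cross (pu φ q) (pv φ q) ≠ 0) : ContDiffAt ℝ ∞ (nvec φ) q := by
  have hc : ContDiffAt ℝ ∞ (fun r => cross (pu φ r) (pv φ r)) q :=
    (hφ.dirDeriv (1, 0) le_rfl).cross (hφ.dirDeriv (0, 1) le_rfl)
  exact ((hc.norm ℝ h).inv (norm_ne_zero_iff.mpr h)).smul hc

end CrossProduct

section Complexification

def toCCLM : E3 →L[ℝ] (Fin 3 → ℂ) :=
  ContinuousLinearMap.pi fun j => ofRealCLM.comp (EuclideanSpace.proj j)

theorem cdot_eq_dotProduct (a b : Fin 3 → ℂ) : cdot a b = a ⬝ᵥ b := rfl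

theorem dotProduct_toC (a b : E3) : toC a ⬝ᵥ toC b = ⟪a, b⟫_ℝ := by
  simp only [dotProduct, toC, Fin.sum_univ_three, PiLp.inner_apply, RCLike.inner_apply,
    Real.ringHom_apply]
  push_cast
  ring

theorem dz_phiz {f : ℝ × ℝ → E3} {q : ℝ × ℝ} (hf : ContDiffAt ℝ 2 f q) :
    dz (phiz f) q = (4 : ℂ)⁻¹ • (toC (dirDeriv (1, 0) (dirDeriv (1, 0) f) q)
      - (2 * I) • toC (dirDeriv (1, 0) (dirDeriv (0, 1) f) q)
      - toC (dirDeriv (0, 1) (dirDeriv (0, 1) f) q)) := by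
  have hd (w : ℝ × ℝ) : DifferentiableAt ℝ (fun r => toCCLM (dirDeriv w f r)) q :=
    toCCLM.differentiableAt.comp q
      ((hf.dirDeriv w (m := 1) (by norm_num)).differentiableAt one_ne_zero)
  have hphiz (w : ℝ × ℝ) : dirDeriv w (phiz f) q = (2 : ℂ)⁻¹ •
      (toC (dirDeriv w (dirDeriv (1, 0) f) q) - I • toC (dirDeriv w (dirDeriv (0, 1) f) q)) := by
    rw [show phiz f = fun r => (2 : ℂ)⁻¹ •
        (toCCLM (dirDeriv (1, 0) f r) - I • toCCLM (dirDeriv (0, 1) f r)) from rfl,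
      dirDeriv_const_smul _ ((hd _).fun_sub ((hd _).fun_const_smul I)),
      dirDeriv_sub _ (hd _) ((hd _).fun_const_smul I), dirDeriv_const_smul _ (hd _),
      toCCLM.dirDeriv_comp _ ((hf.dirDeriv _ (m := 1) (by norm_num)).differentiableAt one_ne_zero),
      toCCLM.dirDeriv_comp _ ((hf.dirDeriv _ (m := 1) (by norm_num)).differentiableAt one_ne_zero)]
    rfl
  rw [dz_def, hphiz, hphiz, dirDeriv_comm (1, 0) hf (0, 1)]
  linear_combination (norm := module)
    (4 : ℂ)⁻¹ • I_mul_I • toC (dirDeriv (0, 1) (dirDeriv (0, 1) f) q)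

end Complexification

section ConformalImmersion

variable {U : Set (ℝ × ℝ)} {φ : ℝ × ℝ → E3} {lam : ℝ × ℝ → ℝ} {p : ℝ × ℝ}

def secondFundamentalForm (φ : ℝ × ℝ → E3) (x y : ℝ × ℝ) (q : ℝ × ℝ) : ℝ :=
  ⟪dirDeriv x (dirDeriv y φ) q, nvec φ q⟫_ℝ

theorem mcurv_eq (φ : ℝ × ℝ → E3) (lam : ℝ × ℝ → ℝ) (q : ℝ × ℝ) :
    mcurv φ lam q = (secondFundamentalForm φ (1, 0) (1, 0) q
      + secondFundamentalForm φ (0, 1) (0, 1) q) / (2 * lam q ^ 2) := by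
  rw [mcurv, ip, lap_def, inner_add_left]
  rfl

theorem muQ_eq {q : ℝ × ℝ} (hφ : ContDiffAt ℝ 2 φ q) :
    muQ φ q = (4 : ℂ)⁻¹ • ((secondFundamentalForm φ (1, 0) (1, 0) q : ℂ)
      - (2 * I) • (secondFundamentalForm φ (1, 0) (0, 1) q : ℂ)
      - secondFundamentalForm φ (0, 1) (0, 1) q) := by
  rw [muQ, dz_phiz hφ, cdot_eq_dotProduct, smul_dotProduct, sub_dotProduct, sub_dotProduct,
    smul_dotProduct, dotProduct_toC, dotProduct_toC, dotProduct_toC]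
  rfl

theorem secondFundamentalForm_comm {q : ℝ × ℝ} (hφ : ContDiffAt ℝ 2 φ q) (x y : ℝ × ℝ) :
    secondFundamentalForm φ x y q = secondFundamentalForm φ y x q := by
  rw [secondFundamentalForm, dirDeriv_comm y hφ x, secondFundamentalForm]

namespace IsConfImm

theorem eventually_mem (h : IsConfImm U φ lam) (hp : p ∈ U) : ∀ᶠ q in 𝓝 p, q ∈ U :=
  h.1.mem_nhds hp

theorem contDiffAt (h : IsConfImm U φ lam) (hp : p ∈ U) : ContDiffAt ℝ ∞ φ p :=
  h.2.1.contDiffAt (h.1.mem_nhds hp)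

theorem contDiffAt_lam (h : IsConfImm U φ lam) (hp : p ∈ U) : ContDiffAt ℝ ∞ lam p :=
  h.2.2.1.contDiffAt (h.1.mem_nhds hp)

theorem lam_ne_zero (h : IsConfImm U φ lam) (hp : p ∈ U) : lam p ≠ 0 :=
  (h.2.2.2 p hp).1.ne'

theorem cross_ne_zero (h : IsConfImm U φ lam) (hp : p ∈ U) : cross (pu φ p) (pv φ p) ≠ 0 := by
  obtain ⟨hlam, hu, hv, huv⟩ := h.2.2.2 p hp
  intro h0
  have hcross := inner_cross_self (pu φ p) (pv φ p)
  rw [h0, inner_zero_left] at hcross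
  simp only [ip] at hu hv huv
  rw [hu, hv, huv] at hcross
  nlinarith [pow_pos hlam 4]

theorem eventually_secondFundamentalForm_comm (h : IsConfImm U φ lam) (hp : p ∈ U) :
    secondFundamentalForm φ (0, 1) (1, 0) =ᶠ[𝓝 p] secondFundamentalForm φ (1, 0) (0, 1) :=
  (h.eventually_mem hp).mono fun _ hq =>
    secondFundamentalForm_comm (contDiffAt_infty.1 (h.contDiffAt hq) 2) _ _

theorem contDiffAt_secondFundamentalForm (h : IsConfImm U φ lam) (hp : p ∈ U) (x y : ℝ × ℝ) :
    ContDiffAt ℝ ∞ (secondFundamentalForm φ x y) p :=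
  (((h.contDiffAt hp).dirDeriv y le_rfl).dirDeriv x le_rfl).inner ℝ
    (contDiffAt_nvec (h.contDiffAt hp) (h.cross_ne_zero hp))

theorem contDiffAt_mcurv (h : IsConfImm U φ lam) (hp : p ∈ U) :
    ContDiffAt ℝ ∞ (mcurv φ lam) p := by
  rw [funext (mcurv_eq φ lam)]
  exact ((h.contDiffAt_secondFundamentalForm hp _ _).add
    (h.contDiffAt_secondFundamentalForm hp _ _)).div
    (contDiffAt_const.mul ((h.contDiffAt_lam hp).pow 2)) (by simp [h.lam_ne_zero hp])

theorem contDiffAt_muQ (h : IsConfImm U φ lam) (hp : p ∈ U) : ContDiffAt ℝ ∞ (muQ φ) p := by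
  have hII (x y : ℝ × ℝ) := (h.contDiffAt_secondFundamentalForm hp x y).ofReal
  refine ((((hII (1, 0) (1, 0)).sub ((hII (1, 0) (0, 1)).const_smul (2 * I))).sub
    (hII (0, 1) (0, 1))).const_smul (4 : ℂ)⁻¹).congr_of_eventuallyEq ?_
  exact (h.eventually_mem hp).mono fun q hq => muQ_eq (contDiffAt_infty.1 (h.contDiffAt hq) 2)

theorem codazzi (h : IsConfImm U φ lam) (hp : p ∈ U) (x y : ℝ × ℝ)
    (hxy : x = (1, 0) ∧ y = (0, 1) ∨ x = (0, 1) ∧ y = (1, 0)) :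
    dirDeriv y (secondFundamentalForm φ x x) p - dirDeriv x (secondFundamentalForm φ x y) p
      = 2 * lam p * dirDeriv y lam p * mcurv φ lam p := by
  have hU := h.eventually_mem hp
  have hconf : ∀ᶠ q in 𝓝 p, ⟪dirDeriv x φ q, dirDeriv x φ q⟫_ℝ = lam q ^ 2 ∧
      ⟪dirDeriv y φ q, dirDeriv y φ q⟫_ℝ = lam q ^ 2 ∧ ⟪dirDeriv x φ q, dirDeriv y φ q⟫_ℝ = 0 ∧
      ⟪dirDeriv x φ q, nvec φ q⟫_ℝ = 0 ∧ ⟪dirDeriv y φ q, nvec φ q⟫_ℝ = 0 := by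
    filter_upwards [hU] with q hq
    obtain ⟨-, hu, hv, huv⟩ := h.2.2.2 q hq
    rcases hxy with ⟨rfl, rfl⟩ | ⟨rfl, rfl⟩
    · exact ⟨hu, hv, huv, inner_pu_nvec φ q, inner_pv_nvec φ q⟩
    · exact ⟨hv, hu, (real_inner_comm _ _).trans huv, inner_pv_nvec φ q, inner_pu_nvec φ q⟩
  have hsum : secondFundamentalForm φ x x p + secondFundamentalForm φ y y p
      = 2 * lam p ^ 2 * mcurv φ lam p := by
    rw [mcurv_eq]
    field_simp [h.lam_ne_zero hp]
    rcases hxy with ⟨rfl, rfl⟩ | ⟨rfl, rfl⟩ <;> ring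
  refine (codazzi_of_conformal x y finrank_euclideanSpace_fin
    (contDiffAt_infty.1 (h.contDiffAt hp) 3)
    ((contDiffAt_nvec (h.contDiffAt hp) (h.cross_ne_zero hp)).differentiableAt (by simp))
    ((h.contDiffAt_lam hp).differentiableAt (by simp)) (h.lam_ne_zero hp)
    (hconf.mono fun _ hq => hq.1) (hconf.mono fun _ hq => hq.2.1)
    (hconf.mono fun _ hq => hq.2.2.1) (hconf.mono fun _ hq => hq.2.2.2.1)
    (hconf.mono fun _ hq => hq.2.2.2.2)
    (hU.mono fun _ hq => inner_nvec_self (h.cross_ne_zero hq))).trans ?_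
  change dirDeriv y lam p / lam p
    * (secondFundamentalForm φ x x p + secondFundamentalForm φ y y p) = _
  rw [hsum]
  field_simp [h.lam_ne_zero hp]

theorem dirDeriv_secondFundamentalForm_add (h : IsConfImm U φ lam) (hp : p ∈ U) (w : ℝ × ℝ) :
    dirDeriv w (secondFundamentalForm φ (1, 0) (1, 0)) p
        + dirDeriv w (secondFundamentalForm φ (0, 1) (0, 1)) p
      = 4 * lam p * dirDeriv w lam p * mcurv φ lam p
        + 2 * lam p ^ 2 * dirDeriv w (mcurv φ lam) p := by
  have hsum : (fun q => secondFundamentalForm φ (1, 0) (1, 0) q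
      + secondFundamentalForm φ (0, 1) (0, 1) q) =ᶠ[𝓝 p]
      fun q => 2 * (lam q * (lam q * mcurv φ lam q)) := by
    filter_upwards [h.eventually_mem hp] with q hq
    rw [mcurv_eq]
    field_simp [h.lam_ne_zero hq]
  have hII (x y : ℝ × ℝ) :=
    (h.contDiffAt_secondFundamentalForm hp x y).differentiableAt (by simp)
  have hlam := (h.contDiffAt_lam hp).differentiableAt (by simp)
  have hH := (h.contDiffAt_mcurv hp).differentiableAt (by simp)
  rw [← dirDeriv_add w (hII _ _) (hII _ _), dirDeriv_congr_of_eventuallyEq w hsum,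
    dirDeriv_mul w (differentiableAt_const _) (hlam.fun_mul (hlam.fun_mul hH)),
    dirDeriv_mul w hlam (hlam.fun_mul hH), dirDeriv_mul w hlam hH, dirDeriv_const]
  ring

theorem dirDeriv_muQ (h : IsConfImm U φ lam) (hp : p ∈ U) (w : ℝ × ℝ) :
    dirDeriv w (muQ φ) p
      = (4 : ℂ)⁻¹ • (((dirDeriv w (secondFundamentalForm φ (1, 0) (1, 0)) p : ℝ) : ℂ)
        - (2 * I) • ((dirDeriv w (secondFundamentalForm φ (1, 0) (0, 1)) p : ℝ) : ℂ)
        - ((dirDeriv w (secondFundamentalForm φ (0, 1) (0, 1)) p : ℝ) : ℂ)) := by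
  have hII (x y : ℝ × ℝ) :=
    (h.contDiffAt_secondFundamentalForm hp x y).differentiableAt (by simp)
  have hIIc (x y : ℝ × ℝ) :
      DifferentiableAt ℝ (fun q => (secondFundamentalForm φ x y q : ℂ)) p :=
    ofRealCLM.differentiableAt.comp p (hII x y)
  rw [dirDeriv_congr_of_eventuallyEq w ((h.eventually_mem hp).mono fun q hq =>
      muQ_eq (contDiffAt_infty.1 (h.contDiffAt hq) 2)),
    dirDeriv_const_smul w
      (((hIIc _ _).fun_sub ((hIIc _ _).fun_const_smul _)).fun_sub (hIIc _ _)),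
    dirDeriv_sub w ((hIIc _ _).fun_sub ((hIIc _ _).fun_const_smul _)) (hIIc _ _),
    dirDeriv_sub w (hIIc _ _) ((hIIc _ _).fun_const_smul _), dirDeriv_const_smul w (hIIc _ _),
    dirDeriv_ofReal w (hII _ _), dirDeriv_ofReal w (hII _ _), dirDeriv_ofReal w (hII _ _)]

theorem dzbar_muQ (h : IsConfImm U φ lam) (hp : p ∈ U) :
    dzbar (muQ φ) p = 2⁻¹ * (lam p * (lam p * dz (fun q => (mcurv φ lam q : ℂ)) p)) := by
  have hH := (h.contDiffAt_mcurv hp).differentiableAt (by simp)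
  have hcu := congrArg ((↑) : ℝ → ℂ) (h.codazzi hp (1, 0) (0, 1) (Or.inl ⟨rfl, rfl⟩))
  have hcv := congrArg ((↑) : ℝ → ℂ) (h.codazzi hp (0, 1) (1, 0) (Or.inr ⟨rfl, rfl⟩))
  have hsu := congrArg ((↑) : ℝ → ℂ) (h.dirDeriv_secondFundamentalForm_add hp (1, 0))
  have hsv := congrArg ((↑) : ℝ → ℂ) (h.dirDeriv_secondFundamentalForm_add hp (0, 1))
  rw [dirDeriv_congr_of_eventuallyEq (0, 1) (h.eventually_secondFundamentalForm_comm hp)] at hcv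
  push_cast at hcu hcv hsu hsv
  rw [dzbar_def, dz_def, h.dirDeriv_muQ hp, h.dirDeriv_muQ hp, dirDeriv_ofReal _ hH,
    dirDeriv_ofReal _ hH]
  simp only [smul_eq_mul]
  linear_combination (8 : ℂ)⁻¹ * hsu - (4 : ℂ)⁻¹ * hcv - (I / 8) * hsv + (I / 4) * hcu
    - (4 : ℂ)⁻¹ * ((dirDeriv (0, 1) (secondFundamentalForm φ (1, 0) (0, 1)) p : ℝ) : ℂ) * I_mul_I

end IsConfImm

end ConformalImmersion

/-- differentiated Codazzi equation:
Δμ = 2λ (2 λ_z H_z + λ H_zz) with Δ = ∂_uu + ∂_vv. -/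
theorem conformal_differentiated_codazzi_equation
    (U : Set (ℝ × ℝ)) (φ : ℝ × ℝ → E3) (lam : ℝ × ℝ → ℝ)
    (h : IsConfImm U φ lam) :
    ∀ p ∈ U,
      lap (fun q => muQ φ q) p
        = 2 * (lam p : ℂ)
            * (2 * dz (fun q => (lam q : ℂ)) p
                  * dz (fun q => (mcurv φ lam q : ℂ)) p
               + (lam p : ℂ) * dz (fun q => dz (fun r => (mcurv φ lam r : ℂ)) q) p) := by
  intro p hp
  have hlam := (h.contDiffAt_lam hp).ofReal.differentiableAt (by simp)
  have hdzH := ((h.contDiffAt_mcurv hp).ofReal.dz (m := ∞) le_rfl).differentiableAt (by simp)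
  have hdzbar : dzbar (muQ φ) =ᶠ[𝓝 p]
      fun q => 2⁻¹ * (lam q * (lam q * dz (fun r => (mcurv φ lam r : ℂ)) q)) :=
    (h.eventually_mem hp).mono fun q hq => h.dzbar_muQ hq
  rw [lap_eq_four_smul_dz_dzbar (contDiffAt_infty.1 (h.contDiffAt_muQ hp) 2),
    dz_congr_of_eventuallyEq hdzbar, dz_const_mul _ (hlam.fun_mul (hlam.fun_mul hdzH)),
    dz_mul hlam (hlam.fun_mul hdzH), dz_mul hlam hdzH, smul_eq_mul]
  ring
end
end

section
/- Let φ be a conformal immersion on an open set U ⊆ ℝ² with conformal factor λ, with unit normal n := (φ_u × φ_v)/‖φ_u × φ_v‖ and second fundamental form coefficients L := ⟨φ_uu, n⟩, M := ⟨φ_uv, n⟩, N := ⟨φ_vv, n⟩. Then the Gaussian curvature K := (LN − M²)/λ⁴ satisfies, at every point of U, K = −(1/λ²) Δ(log λ), where Δ := ∂_uu + ∂_vv is the real Laplacian; equivalently, LN − M² = −λ² Δ(log λ) (Gauss's theorema egregium in conformal coordinates, the paper's equation (9) with log λ² = 2 log λ). -/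
/-! The conformality relations ⟨φ_u, φ_u⟩ = ⟨φ_v, φ_v⟩ = λ², ⟨φ_u, φ_v⟩ = 0, differentiated once,
give every tangential component of the second derivatives of φ in terms of λ and its first
derivatives; differentiated twice (using φ_uuv = φ_uvu), they give
⟨φ_uu, φ_vv⟩ − ⟨φ_uv, φ_uv⟩. Expanding ⟨·,·⟩ in the orthogonal frame (φ_u, φ_v, n) turns
LN − M² into ⟨φ_uu, φ_vv⟩ − ⟨φ_uv, φ_uv⟩ minus tangential terms, hence into
λ_u² + λ_v² − λ Δλ = −λ² Δ(log λ). -/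

open Complex

noncomputable section

lemma ip_comm (a b : E3) : ip a b = ip b a := real_inner_comm b a

lemma ip_eq_sum (a b : E3) : ip a b = a 0 * b 0 + a 1 * b 1 + a 2 * b 2 := by
  simp only [ip, PiLp.inner_apply, RCLike.inner_apply, Real.ringHom_apply, Fin.sum_univ_three]
  ring

lemma cross_apply_zero (a b : E3) : cross a b 0 = a 1 * b 2 - a 2 * b 1 := rfl

lemma cross_apply_one (a b : E3) : cross a b 1 = a 2 * b 0 - a 0 * b 2 := rfl

lemma cross_apply_two (a b : E3) : cross a b 2 = a 0 * b 1 - a 1 * b 0 := rfl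

lemma ip_cross_self (u v : E3) :
    ip (cross u v) (cross u v) = ip u u * ip v v - ip u v ^ 2 := by
  simp only [ip_eq_sum, cross_apply_zero, cross_apply_one, cross_apply_two]
  ring

lemma ip_cross_mul_ip_cross (u v a b : E3) :
    ip a (cross u v) * ip b (cross u v) =
      ip a b * (ip u u * ip v v - ip u v ^ 2) - ip a u * ip b u * ip v v
        - ip a v * ip b v * ip u u + ip u v * (ip a u * ip b v + ip a v * ip b u) := by
  simp only [ip_eq_sum, cross_apply_zero, cross_apply_one, cross_apply_two]
  ring

lemma norm_cross_of_conformal {u v : E3} {l : ℝ} (huu : ip u u = l ^ 2) (hvv : ip v v = l ^ 2)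
    (huv : ip u v = 0) : ‖cross u v‖ = l ^ 2 := by
  have hsq : ‖cross u v‖ ^ 2 = (l ^ 2) ^ 2 := by
    rw [← real_inner_self_eq_norm_sq, ← ip, ip_cross_self, huu, hvv, huv]
    ring
  exact (pow_left_inj₀ (norm_nonneg _) (sq_nonneg l) two_ne_zero).1 hsq

lemma ip_mul_ip_unit_normal {u v : E3} {l : ℝ} (hl : l ≠ 0) (huu : ip u u = l ^ 2)
    (hvv : ip v v = l ^ 2) (huv : ip u v = 0) (a b : E3) :
    ip a (‖cross u v‖⁻¹ • cross u v) * ip b (‖cross u v‖⁻¹ • cross u v) =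
      ip a b - (ip a u * ip b u + ip a v * ip b v) / l ^ 2 := by
  have hexp := ip_cross_mul_ip_cross u v a b
  rw [huu, hvv, huv] at hexp
  simp only [ip, real_inner_smul_right] at hexp ⊢
  rw [norm_cross_of_conformal huu hvv huv]
  field_simp
  linear_combination hexp

section Calculus

variable {F : Type} [NormedAddCommGroup F] [NormedSpace ℝ F] {U : Set (ℝ × ℝ)} {p : ℝ × ℝ}

lemma ContDiffOn.fderiv_apply_of_isOpen {f : ℝ × ℝ → F} (hf : ContDiffOn ℝ (⊤ : ℕ∞) f U)
    (hU : IsOpen U) (w : ℝ × ℝ) : ContDiffOn ℝ (⊤ : ℕ∞) (fun q => fderiv ℝ f q w) U :=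
  ((contDiffOn_infty_iff_fderiv_of_isOpen hU).1 hf).2.clm_apply contDiffOn_const

lemma ContDiffOn.pu {f : ℝ × ℝ → F} (hf : ContDiffOn ℝ (⊤ : ℕ∞) f U) (hU : IsOpen U) :
    ContDiffOn ℝ (⊤ : ℕ∞) (pu f) U :=
  hf.fderiv_apply_of_isOpen hU (1, 0)

lemma ContDiffOn.pv {f : ℝ × ℝ → F} (hf : ContDiffOn ℝ (⊤ : ℕ∞) f U) (hU : IsOpen U) :
    ContDiffOn ℝ (⊤ : ℕ∞) (pv f) U :=
  hf.fderiv_apply_of_isOpen hU (0, 1)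

lemma ContDiffOn.differentiableAt_of_isOpen {f : ℝ × ℝ → F} (hf : ContDiffOn ℝ (⊤ : ℕ∞) f U)
    (hU : IsOpen U) (hp : p ∈ U) : DifferentiableAt ℝ f p :=
  (hf.differentiableOn (by simp)).differentiableAt (hU.mem_nhds hp)

lemma fderiv_eq_of_eqOn {f g : ℝ × ℝ → F} (hU : IsOpen U) (hp : p ∈ U) (hfg : Set.EqOn f g U) :
    fderiv ℝ f p = fderiv ℝ g p :=
  (Filter.eventuallyEq_of_mem (hU.mem_nhds hp) hfg).fderiv_eq

lemma fderiv_fderiv_apply_comm {f : ℝ × ℝ → F} (hf : ContDiffAt ℝ 2 f p) (v w : ℝ × ℝ) :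
    fderiv ℝ (fun q => fderiv ℝ f q v) p w = fderiv ℝ (fun q => fderiv ℝ f q w) p v := by
  have hd : DifferentiableAt ℝ (fderiv ℝ f) p :=
    (hf.fderiv_right (m := 1) le_rfl).differentiableAt one_ne_zero
  simp only [fderiv_clm_apply hd (differentiableAt_const _), fderiv_fun_const, Pi.zero_apply,
    ContinuousLinearMap.comp_zero, zero_add, ContinuousLinearMap.flip_apply]
  exact hf.isSymmSndFDerivAt (by simp) w v

lemma pu_pv_comm_of_contDiffOn {f : ℝ × ℝ → F} (hf : ContDiffOn ℝ (⊤ : ℕ∞) f U) (hU : IsOpen U)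
    (hp : p ∈ U) : pu (pv f) p = pv (pu f) p :=
  fderiv_fderiv_apply_comm ((hf.contDiffAt (hU.mem_nhds hp)).of_le (WithTop.coe_le_coe.mpr le_top))
    (0, 1) (1, 0)

lemma ip_fderiv_add_ip_fderiv_of_eqOn {f g : ℝ × ℝ → E3} {k : ℝ × ℝ → ℝ} (hU : IsOpen U)
    (hp : p ∈ U) (hf : DifferentiableAt ℝ f p) (hg : DifferentiableAt ℝ g p)
    (hfg : ∀ q ∈ U, ip (f q) (g q) = k q) (w : ℝ × ℝ) :
    ip (fderiv ℝ f p w) (g p) + ip (f p) (fderiv ℝ g p w) = fderiv ℝ k p w := by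
  rw [← fderiv_eq_of_eqOn hU hp hfg, add_comm]
  exact (fderiv_inner_apply (𝕜 := ℝ) hf hg w).symm

lemma ip_fderiv_self_of_eqOn_sq {f : ℝ × ℝ → E3} {l : ℝ × ℝ → ℝ} (hU : IsOpen U) (hp : p ∈ U)
    (hf : DifferentiableAt ℝ f p) (hl : DifferentiableAt ℝ l p)
    (hfl : ∀ q ∈ U, ip (f q) (f q) = l q ^ 2) (w : ℝ × ℝ) :
    ip (fderiv ℝ f p w) (f p) = l p * fderiv ℝ l p w := by
  have hd := ip_fderiv_add_ip_fderiv_of_eqOn hU hp hf hf hfl w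
  rw [ip_comm (f p), fderiv_fun_pow 2 hl] at hd
  simp only [Nat.add_one_sub_one, pow_one, nsmul_eq_mul, Nat.cast_ofNat, smul_apply,
    smul_eq_mul] at hd
  linarith

lemma sq_mul_fderiv_fderiv_log {l : ℝ × ℝ → ℝ} (hU : IsOpen U) (hl : ContDiffOn ℝ (⊤ : ℕ∞) l U)
    (hl0 : ∀ q ∈ U, l q ≠ 0) (hp : p ∈ U) (w : ℝ × ℝ) :
    l p ^ 2 * fderiv ℝ (fun q => fderiv ℝ (fun r => Real.log (l r)) q w) p w
      = l p * fderiv ℝ (fun q => fderiv ℝ l q w) p w - fderiv ℝ l p w ^ 2 := by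
  have hlog := hl.log hl0
  have hD : ∀ q ∈ U, l q * fderiv ℝ (fun r => Real.log (l r)) q w = fderiv ℝ l q w := by
    intro q hq
    rw [fderiv.log (hl.differentiableAt_of_isOpen hU hq) (hl0 q hq)]
    simp [hl0 q hq]
  have hDD := fderiv_eq_of_eqOn hU hp hD
  rw [fderiv_fun_mul (hl.differentiableAt_of_isOpen hU hp)
    ((hlog.fderiv_apply_of_isOpen hU w).differentiableAt_of_isOpen hU hp)] at hDD
  have hDD' := congrArg (fun L => L w) hDD
  simp only [add_apply, smul_apply, smul_eq_mul] at hDD'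
  have hD' := hD p hp
  linear_combination l p * hDD' - fderiv ℝ l p w * hD'

lemma sq_mul_lap_log {l : ℝ × ℝ → ℝ} (hU : IsOpen U) (hl : ContDiffOn ℝ (⊤ : ℕ∞) l U)
    (hl0 : ∀ q ∈ U, l q ≠ 0) (hp : p ∈ U) :
    l p ^ 2 * lap (fun q => Real.log (l q)) p = l p * lap l p - pu l p ^ 2 - pv l p ^ 2 := by
  have hu : l p ^ 2 * pu (pu fun q => Real.log (l q)) p = l p * pu (pu l) p - pu l p ^ 2 :=
    sq_mul_fderiv_fderiv_log hU hl hl0 hp (1, 0)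
  have hv : l p ^ 2 * pv (pv fun q => Real.log (l q)) p = l p * pv (pv l) p - pv l p ^ 2 :=
    sq_mul_fderiv_fderiv_log hU hl hl0 hp (0, 1)
  simp only [lap]
  linear_combination hu + hv

end Calculus

namespace IsConfImm

variable {U : Set (ℝ × ℝ)} {φ : ℝ × ℝ → E3} {lam : ℝ × ℝ → ℝ} {p : ℝ × ℝ}

lemma ip_fderiv_pu_self (h : IsConfImm U φ lam) (hp : p ∈ U) (w : ℝ × ℝ) :
    ip (fderiv ℝ (pu φ) p w) (pu φ p) = lam p * fderiv ℝ lam p w := by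
  obtain ⟨hU, hφ, hlam, hconf⟩ := h
  exact ip_fderiv_self_of_eqOn_sq hU hp ((hφ.pu hU).differentiableAt_of_isOpen hU hp)
    (hlam.differentiableAt_of_isOpen hU hp) (fun q hq => (hconf q hq).2.1) w

lemma ip_fderiv_pv_self (h : IsConfImm U φ lam) (hp : p ∈ U) (w : ℝ × ℝ) :
    ip (fderiv ℝ (pv φ) p w) (pv φ p) = lam p * fderiv ℝ lam p w := by
  obtain ⟨hU, hφ, hlam, hconf⟩ := h
  exact ip_fderiv_self_of_eqOn_sq hU hp ((hφ.pv hU).differentiableAt_of_isOpen hU hp)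
    (hlam.differentiableAt_of_isOpen hU hp) (fun q hq => (hconf q hq).2.2.1) w

lemma ip_fderiv_pu_pv_add (h : IsConfImm U φ lam) (hp : p ∈ U) (w : ℝ × ℝ) :
    ip (fderiv ℝ (pu φ) p w) (pv φ p) + ip (pu φ p) (fderiv ℝ (pv φ) p w) = 0 := by
  obtain ⟨hU, hφ, -, hconf⟩ := h
  rw [ip_fderiv_add_ip_fderiv_of_eqOn (k := fun _ => 0) hU hp
    ((hφ.pu hU).differentiableAt_of_isOpen hU hp) ((hφ.pv hU).differentiableAt_of_isOpen hU hp)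
    (fun q hq => (hconf q hq).2.2.2) w]
  simp

lemma ip_uu_u (h : IsConfImm U φ lam) (hp : p ∈ U) :
    ip (pu (pu φ) p) (pu φ p) = lam p * pu lam p :=
  h.ip_fderiv_pu_self hp (1, 0)

lemma ip_uv_u (h : IsConfImm U φ lam) (hp : p ∈ U) :
    ip (pu (pv φ) p) (pu φ p) = lam p * pv lam p := by
  rw [pu_pv_comm_of_contDiffOn h.2.1 h.1 hp]
  exact h.ip_fderiv_pu_self hp (0, 1)

lemma ip_uv_v (h : IsConfImm U φ lam) (hp : p ∈ U) :
    ip (pu (pv φ) p) (pv φ p) = lam p * pu lam p :=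
  h.ip_fderiv_pv_self hp (1, 0)

lemma ip_vv_v (h : IsConfImm U φ lam) (hp : p ∈ U) :
    ip (pv (pv φ) p) (pv φ p) = lam p * pv lam p :=
  h.ip_fderiv_pv_self hp (0, 1)

lemma ip_uu_v (h : IsConfImm U φ lam) (hp : p ∈ U) :
    ip (pu (pu φ) p) (pv φ p) = -(lam p * pv lam p) := by
  have hF : ip (pu (pu φ) p) (pv φ p) + ip (pu φ p) (pu (pv φ) p) = 0 :=
    h.ip_fderiv_pu_pv_add hp (1, 0)
  rw [ip_comm (pu φ p), h.ip_uv_u hp] at hF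
  linarith

lemma ip_vv_u (h : IsConfImm U φ lam) (hp : p ∈ U) :
    ip (pv (pv φ) p) (pu φ p) = -(lam p * pu lam p) := by
  have hF : ip (pv (pu φ) p) (pv φ p) + ip (pu φ p) (pv (pv φ) p) = 0 :=
    h.ip_fderiv_pu_pv_add hp (0, 1)
  rw [← pu_pv_comm_of_contDiffOn h.2.1 h.1 hp, h.ip_uv_v hp, ip_comm] at hF
  linarith

lemma ip_uu_vv_sub_ip_uv_uv (h : IsConfImm U φ lam) (hp : p ∈ U) :
    ip (pu (pu φ) p) (pv (pv φ) p) - ip (pu (pv φ) p) (pu (pv φ) p)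
      = -(lam p * lap lam p + pu lam p ^ 2 + pv lam p ^ 2) := by
  obtain ⟨hU, hφ, hlam, -⟩ := id h
  have hφuu_v := ip_fderiv_add_ip_fderiv_of_eqOn hU hp
    (((hφ.pu hU).pu hU).differentiableAt_of_isOpen hU hp)
    ((hφ.pv hU).differentiableAt_of_isOpen hU hp) (fun q hq => h.ip_uu_v hq) (0, 1)
  have hφuv_v := ip_fderiv_add_ip_fderiv_of_eqOn hU hp
    (((hφ.pv hU).pu hU).differentiableAt_of_isOpen hU hp)
    ((hφ.pv hU).differentiableAt_of_isOpen hU hp) (fun q hq => h.ip_uv_v hq) (1, 0)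
  have huuv : pv (pu (pu φ)) p = pu (pu (pv φ)) p := by
    rw [← pu_pv_comm_of_contDiffOn (hφ.pu hU) hU hp]
    exact congrArg (fun L => L (1, 0))
      (fderiv_eq_of_eqOn hU hp fun q hq => (pu_pv_comm_of_contDiffOn hφ hU hq).symm)
  have hdlam := hlam.differentiableAt_of_isOpen hU hp
  rw [fderiv_fun_neg, fderiv_fun_mul hdlam ((hlam.pv hU).differentiableAt_of_isOpen hU hp)]
    at hφuu_v
  rw [fderiv_fun_mul hdlam ((hlam.pu hU).differentiableAt_of_isOpen hU hp)] at hφuv_v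
  simp only [neg_apply, add_apply, smul_apply, smul_eq_mul] at hφuu_v hφuv_v
  change ip (pv (pu (pu φ)) p) (pv φ p) + ip (pu (pu φ) p) (pv (pv φ) p)
    = -(lam p * pv (pv lam) p + pv lam p * pv lam p) at hφuu_v
  change ip (pu (pu (pv φ)) p) (pv φ p) + ip (pu (pv φ) p) (pu (pv φ) p)
    = lam p * pu (pu lam) p + pu lam p * pu lam p at hφuv_v
  rw [huuv] at hφuu_v
  unfold lap
  linear_combination hφuu_v - hφuv_v

lemma det_second_fundamental_form (h : IsConfImm U φ lam) (hp : p ∈ U) :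
    ip (pu (pu φ) p) (nvec φ p) * ip (pv (pv φ) p) (nvec φ p) - ip (pu (pv φ) p) (nvec φ p) ^ 2
      = pu lam p ^ 2 + pv lam p ^ 2 - lam p * lap lam p := by
  obtain ⟨hl, hE, hG, hF⟩ := h.2.2.2 p hp
  have hframe := ip_mul_ip_unit_normal hl.ne' hE hG hF
  rw [nvec, sq (ip _ _), hframe, hframe, h.ip_uu_u hp, h.ip_uu_v hp, h.ip_vv_u hp,
    h.ip_vv_v hp, h.ip_uv_u hp, h.ip_uv_v hp]
  field_simp
  linear_combination h.ip_uu_vv_sub_ip_uv_uv hp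

end IsConfImm

/-- theorema egregium in conformal coordinates:
K = −(1/λ²) Δ(log λ), equivalently LN − M² = −λ² Δ(log λ). -/
theorem conformal_gaussian_curvature_formula
    (U : Set (ℝ × ℝ)) (φ : ℝ × ℝ → E3) (lam : ℝ × ℝ → ℝ)
    (h : IsConfImm U φ lam) :
    ∀ p ∈ U,
      (ip (pu (pu φ) p) (nvec φ p) * ip (pv (pv φ) p) (nvec φ p)
          - ip (pu (pv φ) p) (nvec φ p) ^ 2) / (lam p) ^ 4
        = -(1 / (lam p) ^ 2) * lap (fun q => Real.log (lam q)) p ∧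
      ip (pu (pu φ) p) (nvec φ p) * ip (pv (pv φ) p) (nvec φ p)
          - ip (pu (pv φ) p) (nvec φ p) ^ 2
        = -((lam p) ^ 2) * lap (fun q => Real.log (lam q)) p := by
  obtain ⟨hU, -, hlam, hconf⟩ := id h
  intro p hp
  have hl : lam p ≠ 0 := (hconf p hp).1.ne'
  have hdet : ip (pu (pu φ) p) (nvec φ p) * ip (pv (pv φ) p) (nvec φ p)
      - ip (pu (pv φ) p) (nvec φ p) ^ 2 = -((lam p) ^ 2) * lap (fun q => Real.log (lam q)) p := by
    rw [h.det_second_fundamental_form hp]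
    linear_combination sq_mul_lap_log hU hlam (fun q hq => (hconf q hq).1.ne') hp
  refine ⟨?_, hdet⟩
  rw [hdet]
  field_simp
end
end
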